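/- Let (W,S) be a Coxeter system with set of reflections T, alternating subgroup W^+, and fix s_0 ∈ S. Then the absolute order Abs_0(W^+) on W^+ is isomorphic as a poset to the absolute order Abs(W/⟨s_0⟩) on the set of left cosets of the subgroup ⟨s_0⟩ generated by s_0. An isomorphism is given by φ(w) = w⟨s_0⟩ if ℓ_{T_0}(w) is even and φ(w) = s_0 w s_0 ⟨s_0⟩ if ℓ_{T_0}(w) is odd. -/

import Mathlib

attribute [local instance] Classical.propDecidable

/-- The absolute length of `w` with respect to a set `T`: the minimum length of a word
for `w` in the alphabet `T`. -/
noncomputable def absLength {W : Type*} [Group W] (T : Set W) (w : W) : ℕ :=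
  sInf {n | ∃ l : List W, (∀ t ∈ l, t ∈ T) ∧ l.prod = w ∧ l.length = n}

/-- The set of reflections `T` of a Coxeter system. -/
def reflSet {B W : Type*} [Group W] {M : CoxeterMatrix B} (cs : CoxeterSystem M W) :
    Set W := {t | cs.IsReflection t}

/-- The set `T₀ = {s₀ t : t ∈ T}`. -/
def tZero {B W : Type*} [Group W] {M : CoxeterMatrix B} (cs : CoxeterSystem M W)
    (i₀ : B) : Set W := {w | ∃ t, cs.IsReflection t ∧ w = cs.simple i₀ * t}

/-- The alternating subgroup `W⁺` of a Coxeter system: the kernel of the sign character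
(which maps every simple reflection to `−1`). -/
def alternating {B W : Type*} [Group W] {M : CoxeterMatrix B} (cs : CoxeterSystem M W) :
    Subgroup W := cs.lengthParity.ker

/-- The absolute length of a left coset `x ∈ W/H`: the minimum of `ℓ_T` over `x`. -/
noncomputable def cosetLength {W : Type*} [Group W] (T : Set W) (H : Subgroup W)
    (x : W ⧸ H) : ℕ :=
  sInf {n | ∃ w : W, (w : W ⧸ H) = x ∧ absLength T w = n}

/-- The absolute order on `X = W/H` : `x ≤_T y` iff `y = w x` for some `w ∈ W` with
`ℓ_T(w) = ℓ_T(y) − ℓ_T(x)`. -/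
def cosetLe {W : Type*} [Group W] (T : Set W) (H : Subgroup W) (x y : W ⧸ H) : Prop :=
  ∃ w : W, y = w • x ∧ cosetLength T H x + absLength T w = cosetLength T H y

/-- The absolute order `Abs₀(W⁺)` on the alternating subgroup: the reflexive and
transitive closure of the relation consisting of the pairs `(u,v)` of elements of `W⁺`
with `v = τ u` for some `τ ∈ T₀` and `ℓ_{T₀}(u) < ℓ_{T₀}(v)`. -/
def altLe {B W : Type*} [Group W] {M : CoxeterMatrix B} (cs : CoxeterSystem M W)
    (i₀ : B) (u v : W) : Prop :=
  Relation.ReflTransGen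
    (fun a b => a ∈ alternating cs ∧ b ∈ alternating cs ∧
      ∃ τ ∈ tZero cs i₀, b = τ * a ∧
        absLength (tZero cs i₀) a < absLength (tZero cs i₀) b)
    u v

/-!
Write `s = s₀`, `H = ⟨s⟩ = {1, s}`, and `ℓ`, `ℓ₀` for `ℓ_T`, `ℓ_{T₀}`. Moving the letters `s` of
a word `(s t₁)(s t₂)⋯(s t_k)` to the front turns it into `s^k t₁'⋯t_k'` with `t_j'` conjugate to
`t_j`, so `T₀`-words of length `k` for `w` correspond to `T`-words of length `k` for `s^k w`.
Since `ℓ(w)` has the parity of the sign of `w`, this gives `ℓ₀(w) = min (ℓ w) (ℓ (s w))` for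
`w ∈ W⁺`, which is the absolute length of the coset `wH`. Hence `φ(w) = s^{ℓ₀ w} w H` preserves
lengths, and parity makes it a bijection `W⁺ → W/H`. Both orders are generated by their steps of
length one (for `W/H`: follow a minimal `T`-word of `w` in `y = w x` letter by letter), and `φ`
matches the steps: if `ℓ₀ u = k`, the step `u → (s t) u` goes to `φ u → (s^k t s^k) φ u`, and by
parity every step out of `φ u` arises in this way.
-/

section AbsLength

variable {G : Type*} [Group G] {T : Set G}

theorem absLength_list_prod_le {l : List G} (hl : ∀ t ∈ l, t ∈ T) :
    absLength T l.prod ≤ l.length :=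
  Nat.sInf_le ⟨l, hl, rfl, rfl⟩

theorem exists_list_length_eq_absLength {g : G} (hg : g ∈ Submonoid.closure T) :
    ∃ l : List G, (∀ t ∈ l, t ∈ T) ∧ l.prod = g ∧ l.length = absLength T g := by
  obtain ⟨l, hl, rfl⟩ := Submonoid.exists_list_of_mem_closure hg
  exact Nat.sInf_mem (s := {n | ∃ l' : List G, (∀ t ∈ l', t ∈ T) ∧ l'.prod = l.prod ∧
    l'.length = n}) ⟨l.length, l, hl, rfl, rfl⟩

theorem absLength_one : absLength T 1 = 0 :=
  Nat.le_zero.mp (absLength_list_prod_le (l := []) (by simp))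

theorem absLength_le_one {t : G} (ht : t ∈ T) : absLength T t ≤ 1 := by
  simpa using absLength_list_prod_le (l := [t]) (by simpa using ht)

theorem mem_closure_of_eq_top (hT : Submonoid.closure T = ⊤) (g : G) :
    g ∈ Submonoid.closure T :=
  (Submonoid.eq_top_iff' _).mp hT g

theorem absLength_mul_le {g h : G} (hg : g ∈ Submonoid.closure T)
    (hh : h ∈ Submonoid.closure T) : absLength T (g * h) ≤ absLength T g + absLength T h := by
  obtain ⟨l, hl, rfl, hlg⟩ := exists_list_length_eq_absLength hg
  obtain ⟨m, hm, rfl, hmh⟩ := exists_list_length_eq_absLength hh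
  rw [← hlg, ← hmh, ← List.length_append, ← List.prod_append]
  exact absLength_list_prod_le fun t ht => (List.mem_append.mp ht).elim (hl t) (hm t)

theorem absLength_map_mulAut (e : MulAut G) (he : ∀ t, e t ∈ T ↔ t ∈ T) (g : G) :
    absLength T (e g) = absLength T g := by
  unfold absLength
  congr 1
  ext n
  constructor
  · rintro ⟨l, hl, hprod, rfl⟩
    refine ⟨l.map e.symm, fun t ht => ?_, ?_, l.length_map _⟩
    · obtain ⟨u, hu, rfl⟩ := List.mem_map.mp ht
      exact (he _).mp (by simpa using hl u hu)
    · rw [← map_list_prod, hprod, MulEquiv.symm_apply_apply]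
  · rintro ⟨l, hl, rfl, rfl⟩
    refine ⟨l.map e, fun t ht => ?_, (map_list_prod e l).symm, l.length_map _⟩
    obtain ⟨u, hu, rfl⟩ := List.mem_map.mp ht
    exact (he u).mpr (hl u hu)

end AbsLength

section CosetLength

variable {G : Type*} [Group G] {T : Set G} {H : Subgroup G}

theorem cosetLength_le_absLength {x : G ⧸ H} {g : G} (hg : (g : G ⧸ H) = x) :
    cosetLength T H x ≤ absLength T g :=
  Nat.sInf_le ⟨g, hg, rfl⟩

theorem exists_absLength_eq_cosetLength (x : G ⧸ H) :
    ∃ g : G, (g : G ⧸ H) = x ∧ absLength T g = cosetLength T H x := by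
  obtain ⟨g, rfl⟩ := QuotientGroup.mk_surjective x
  exact Nat.sInf_mem (s := {n | ∃ g' : G, (g' : G ⧸ H) = g ∧ absLength T g' = n})
    ⟨absLength T g, g, rfl, rfl⟩

theorem cosetLength_smul_le (hT : Submonoid.closure T = ⊤) (g : G) (x : G ⧸ H) :
    cosetLength T H (g • x) ≤ absLength T g + cosetLength T H x := by
  obtain ⟨a, rfl, ha⟩ := exists_absLength_eq_cosetLength (T := T) x
  rw [← ha]
  exact (cosetLength_le_absLength rfl).trans
    (absLength_mul_le (mem_closure_of_eq_top hT _) (mem_closure_of_eq_top hT _))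

def cosetStep (T : Set G) (H : Subgroup G) (x y : G ⧸ H) : Prop :=
  ∃ t ∈ T, y = t • x ∧ cosetLength T H x + 1 = cosetLength T H y

theorem cosetLe_iff_reflTransGen_cosetStep (hT : Submonoid.closure T = ⊤) {x y : G ⧸ H} :
    cosetLe T H x y ↔ Relation.ReflTransGen (cosetStep T H) x y := by
  constructor
  · rintro ⟨w, rfl, hw⟩
    obtain ⟨l, hl, rfl, hlen⟩ := exists_list_length_eq_absLength (mem_closure_of_eq_top hT w)
    rw [← hlen] at hw
    clear hlen
    induction l with
    | nil => rw [List.prod_nil, one_smul]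
    | cons t l ih =>
      have ht : t ∈ T := hl t List.mem_cons_self
      have hl' : ∀ u ∈ l, u ∈ T := fun u hu => hl u (List.mem_cons_of_mem t hu)
      rw [List.prod_cons, mul_smul] at hw ⊢
      have hz := (cosetLength_smul_le hT l.prod x).trans
        (Nat.add_le_add_right (absLength_list_prod_le hl') _)
      have hy := (cosetLength_smul_le hT t (l.prod • x)).trans
        (Nat.add_le_add_right (absLength_le_one ht) _)
      rw [List.length_cons] at hw
      exact .tail (ih hl' (by omega)) ⟨t, ht, rfl, by omega⟩
  · intro h
    induction h with
    | refl => exact ⟨1, (one_smul _ _).symm, by rw [absLength_one, add_zero]⟩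
    | tail _ hstep ih =>
      obtain ⟨w, rfl, hw⟩ := ih
      obtain ⟨t, ht, rfl, hlen⟩ := hstep
      refine ⟨t * w, (mul_smul t w x).symm, ?_⟩
      have := absLength_mul_le (mem_closure_of_eq_top hT t) (mem_closure_of_eq_top hT w)
      have := absLength_le_one ht
      have := cosetLength_smul_le hT (t * w) x
      rw [mul_smul] at this
      omega

end CosetLength

theorem Relation.reflTransGen_iff_of_bijOn {α β : Type*} {r : α → α → Prop}
    {p : β → β → Prop} {f : α → β} {s : Set α} (hf : Set.BijOn f s Set.univ)
    (hr : ∀ a b, r a b ↔ a ∈ s ∧ b ∈ s ∧ p (f a) (f b)) {a b : α} (ha : a ∈ s)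
    (hb : b ∈ s) :
    ReflTransGen r a b ↔ ReflTransGen p (f a) (f b) := by
  refine ⟨fun h => h.lift f fun x y hxy => ((hr x y).mp hxy).2.2, fun h => ?_⟩
  suffices ∀ y, ReflTransGen p (f a) y → ∀ b ∈ s, f b = y → ReflTransGen r a b from
    this _ h b hb rfl
  intro y h
  induction h with
  | refl => exact fun b hb hab => hf.injOn ha hb hab.symm ▸ .refl
  | @tail z _ _ hzy ih =>
    intro b hb hby
    obtain ⟨c, hc, rfl⟩ := hf.surjOn (Set.mem_univ z)
    exact .tail (ih c hc rfl) ((hr c b).mpr ⟨hc, hb, hby ▸ hzy⟩)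

namespace CoxeterSystem

open Multiplicative

variable {B W : Type*} [Group W] {M : CoxeterMatrix B} (cs : CoxeterSystem M W)

theorem closure_reflSet : Submonoid.closure (reflSet cs) = ⊤ :=
  top_le_iff.mp <| cs.submonoid_closure_range_simple ▸
    Submonoid.closure_mono (Set.range_subset_iff.mpr cs.isReflection_simple)

theorem absLength_reflSet_conj (g w : W) :
    absLength (reflSet cs) (g * w * g⁻¹) = absLength (reflSet cs) w :=
  absLength_map_mulAut (MulAut.conj g) (fun t => cs.isReflection_conj_iff g t) w

theorem absLength_reflSet_mul_comm (g h : W) :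
    absLength (reflSet cs) (g * h) = absLength (reflSet cs) (h * g) := by
  simpa [mul_assoc] using (cs.absLength_reflSet_conj h (g * h)).symm

theorem lengthParity_of_isReflection {t : W} (ht : cs.IsReflection t) :
    cs.lengthParity t = ofAdd 1 := by
  rw [lengthParity_eq_ofAdd_length, ZMod.natCast_eq_one_iff_odd.mpr ht.odd_length]

theorem lengthParity_eq_ofAdd_absLength (w : W) :
    cs.lengthParity w = ofAdd (absLength (reflSet cs) w : ZMod 2) := by
  obtain ⟨l, hl, rfl, hlen⟩ :=
    exists_list_length_eq_absLength (mem_closure_of_eq_top cs.closure_reflSet w)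
  rw [← hlen, map_list_prod, List.prod_eq_pow_card _ (ofAdd 1), List.length_map, ← ofAdd_nsmul,
    nsmul_one]
  simp only [List.mem_map]
  rintro _ ⟨t, ht, rfl⟩
  exact cs.lengthParity_of_isReflection (hl t ht)

theorem mem_alternating_iff_even (w : W) :
    w ∈ alternating cs ↔ Even (absLength (reflSet cs) w) := by
  rw [alternating, MonoidHom.mem_ker, lengthParity_eq_ofAdd_absLength, ofAdd_eq_one,
    ZMod.natCast_eq_zero_iff_even]

variable (i : B)

theorem simple_pow_of_even {k : ℕ} (hk : Even k) : cs.simple i ^ k = 1 := by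
  obtain ⟨m, rfl⟩ := hk
  rw [← two_mul, pow_mul, simple_sq, one_pow]

theorem simple_pow_of_odd {k : ℕ} (hk : Odd k) : cs.simple i ^ k = cs.simple i := by
  obtain ⟨m, rfl⟩ := hk
  rw [pow_succ, pow_mul, simple_sq, one_pow, one_mul]

theorem simple_pow_mul_self (k : ℕ) : cs.simple i ^ k * cs.simple i ^ k = 1 := by
  rw [← pow_add, ← two_mul, pow_mul, simple_sq, one_pow]

theorem inv_simple_pow (k : ℕ) : (cs.simple i ^ k)⁻¹ = cs.simple i ^ k :=
  inv_eq_of_mul_eq_one_right (cs.simple_pow_mul_self i k)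

theorem lengthParity_simple_pow (k : ℕ) :
    cs.lengthParity (cs.simple i ^ k) = ofAdd (k : ZMod 2) := by
  rw [map_pow, lengthParity_simple, ← ofAdd_nsmul, nsmul_one]

theorem mem_zpowers_simple_iff {h : W} :
    h ∈ Subgroup.zpowers (cs.simple i) ↔ h = 1 ∨ h = cs.simple i := by
  refine ⟨fun hh => ?_, ?_⟩
  · obtain ⟨k, rfl⟩ := Subgroup.mem_zpowers_iff.mp hh
    have hsq : cs.simple i ^ (2 : ℤ) = 1 := by rw [zpow_two, simple_mul_simple_self]
    obtain ⟨m, rfl | rfl⟩ := Int.even_or_odd' k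
    · exact .inl (by rw [zpow_mul, hsq, one_zpow])
    · exact .inr (by rw [zpow_add, zpow_mul, hsq, one_zpow, one_mul, zpow_one])
  · rintro (rfl | rfl)
    exacts [one_mem _, Subgroup.mem_zpowers _]

theorem mk_eq_mk_iff {a b : W} :
    (a : W ⧸ Subgroup.zpowers (cs.simple i)) = b ↔ a = b ∨ a = b * cs.simple i := by
  rw [eq_comm, QuotientGroup.eq, mem_zpowers_simple_iff, inv_mul_eq_one, inv_mul_eq_iff_eq_mul,
    eq_comm (a := b)]

theorem eq_of_mk_eq_of_lengthParity_eq {a b : W}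
    (h : (a : W ⧸ Subgroup.zpowers (cs.simple i)) = b)
    (hp : cs.lengthParity a = cs.lengthParity b) : a = b := by
  obtain rfl | rfl := (cs.mk_eq_mk_iff i).mp h
  · rfl
  · rw [map_mul, lengthParity_simple, mul_eq_left] at hp
    exact absurd hp (by decide)

theorem cosetLength_mk (g : W) :
    cosetLength (reflSet cs) (Subgroup.zpowers (cs.simple i)) g =
      min (absLength (reflSet cs) g) (absLength (reflSet cs) (cs.simple i * g)) := by
  rw [← csInf_pair, cs.absLength_reflSet_mul_comm, cosetLength]
  congr 1
  ext n
  simp only [mk_eq_mk_iff, or_and_right, exists_or, exists_eq_left, Set.mem_ofPred_eq,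
    Set.mem_insert_iff, Set.mem_singleton_iff, eq_comm (a := n)]

theorem cosetLength_mk_simple_pow_mul (k : ℕ) (g : W) :
    cosetLength (reflSet cs) (Subgroup.zpowers (cs.simple i)) (cs.simple i ^ k * g : W) =
      cosetLength (reflSet cs) (Subgroup.zpowers (cs.simple i)) g := by
  obtain hk | hk := Nat.even_or_odd k
  · rw [cs.simple_pow_of_even i hk, one_mul]
  · rw [cs.simple_pow_of_odd i hk, cosetLength_mk, cosetLength_mk, ← mul_assoc,
      simple_mul_simple_self, one_mul, min_comm]

theorem simple_pow_succ_mul_simple_mul (k : ℕ) (g : W) :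
    cs.simple i ^ (k + 1) * (cs.simple i * g) = cs.simple i ^ k * g := by
  rw [pow_succ, mul_assoc, simple_mul_simple_cancel_left]

theorem exists_tZero_list_of_reflSet_list {m : List W} (hm : ∀ t ∈ m, t ∈ reflSet cs) :
    ∃ l : List W, (∀ τ ∈ l, τ ∈ tZero cs i) ∧ l.length = m.length ∧
      l.prod = cs.simple i ^ m.length * m.prod := by
  induction m with
  | nil => exact ⟨[], by simp, rfl, by simp⟩
  | cons t m ih =>
    obtain ⟨l, hl, hlen, hprod⟩ := ih fun u hu => hm u (List.mem_cons_of_mem t hu)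
    refine ⟨cs.simple i * (cs.simple i ^ m.length * t * (cs.simple i ^ m.length)⁻¹) :: l,
      List.forall_mem_cons.mpr ⟨⟨_, (hm t List.mem_cons_self).conj _, rfl⟩, hl⟩,
      by rw [List.length_cons, List.length_cons, hlen], ?_⟩
    rw [List.prod_cons, List.prod_cons, hprod, List.length_cons, pow_succ']
    group

theorem exists_reflSet_list_of_tZero_list {l : List W} (hl : ∀ τ ∈ l, τ ∈ tZero cs i) :
    ∃ m : List W, (∀ t ∈ m, t ∈ reflSet cs) ∧ m.length = l.length ∧
      m.prod = cs.simple i ^ l.length * l.prod := by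
  induction l with
  | nil => exact ⟨[], by simp, rfl, by simp⟩
  | cons τ l ih =>
    obtain ⟨m, hm, hlen, hprod⟩ := ih fun u hu => hl u (List.mem_cons_of_mem τ hu)
    obtain ⟨t, ht, rfl⟩ := hl τ List.mem_cons_self
    refine ⟨cs.simple i ^ l.length * t * (cs.simple i ^ l.length)⁻¹ :: m,
      List.forall_mem_cons.mpr ⟨ht.conj _, hm⟩,
      by rw [List.length_cons, List.length_cons, hlen], ?_⟩
    rw [List.prod_cons, List.prod_cons, hprod, List.length_cons, mul_assoc (cs.simple i),
      simple_pow_succ_mul_simple_mul]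
    group

theorem simple_pow_absLength_mul_mem_alternating (g : W) :
    cs.simple i ^ absLength (reflSet cs) g * g ∈ alternating cs := by
  rw [alternating, MonoidHom.mem_ker, map_mul, lengthParity_simple_pow,
    lengthParity_eq_ofAdd_absLength, ← ofAdd_add, CharTwo.add_self_eq_zero, ofAdd_zero]

theorem odd_absLength_simple_mul {w : W} (hw : w ∈ alternating cs) :
    Odd (absLength (reflSet cs) (cs.simple i * w)) := by
  rw [← ZMod.natCast_eq_one_iff_odd, ← ofAdd.injective.eq_iff,
    ← lengthParity_eq_ofAdd_absLength, map_mul, lengthParity_simple, MonoidHom.mem_ker.mp hw,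
    mul_one]

theorem absLength_tZero_simple_pow_mul_le (g : W) :
    absLength (tZero cs i) (cs.simple i ^ absLength (reflSet cs) g * g) ≤
      absLength (reflSet cs) g := by
  obtain ⟨m, hm, rfl, hlen⟩ :=
    exists_list_length_eq_absLength (mem_closure_of_eq_top cs.closure_reflSet g)
  obtain ⟨l, hl, hllen, hprod⟩ := cs.exists_tZero_list_of_reflSet_list i hm
  rw [← hlen, ← hprod, ← hllen]
  exact absLength_list_prod_le hl

theorem mem_closure_tZero {w : W} (hw : w ∈ alternating cs) :
    w ∈ Submonoid.closure (tZero cs i) := by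
  obtain ⟨m, hm, rfl, hlen⟩ :=
    exists_list_length_eq_absLength (mem_closure_of_eq_top cs.closure_reflSet w)
  obtain ⟨l, hl, -, hprod⟩ := cs.exists_tZero_list_of_reflSet_list i hm
  rw [cs.mem_alternating_iff_even, ← hlen] at hw
  rw [← one_mul m.prod, ← cs.simple_pow_of_even i hw, ← hprod]
  exact Submonoid.list_prod_mem _ fun τ hτ => Submonoid.subset_closure (hl τ hτ)

theorem absLength_simple_pow_mul_le {w : W} (hw : w ∈ alternating cs) :
    absLength (reflSet cs) (cs.simple i ^ absLength (tZero cs i) w * w) ≤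
      absLength (tZero cs i) w := by
  obtain ⟨l, hl, rfl, hlen⟩ := exists_list_length_eq_absLength (cs.mem_closure_tZero i hw)
  obtain ⟨m, hm, hmlen, hprod⟩ := cs.exists_reflSet_list_of_tZero_list i hl
  rw [← hlen, ← hprod, ← hmlen]
  exact absLength_list_prod_le hm

theorem absLength_tZero_eq_cosetLength {w : W} (hw : w ∈ alternating cs) :
    absLength (tZero cs i) w = cosetLength (reflSet cs) (Subgroup.zpowers (cs.simple i)) w := by
  rw [cosetLength_mk]
  refine le_antisymm (le_min ?_ ?_) ?_
  · simpa [cs.simple_pow_of_even i ((cs.mem_alternating_iff_even w).mp hw)] using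
      cs.absLength_tZero_simple_pow_mul_le i w
  · simpa [cs.simple_pow_of_odd i (cs.odd_absLength_simple_mul i hw)] using
      cs.absLength_tZero_simple_pow_mul_le i (cs.simple i * w)
  · have := cs.absLength_simple_pow_mul_le i hw
    obtain hk | hk := Nat.even_or_odd (absLength (tZero cs i) w)
    · rw [cs.simple_pow_of_even i hk, one_mul] at this
      exact (min_le_left _ _).trans this
    · rw [cs.simple_pow_of_odd i hk] at this
      exact (min_le_right _ _).trans this

noncomputable def altCoset (w : W) : W ⧸ Subgroup.zpowers (cs.simple i) :=
  (cs.simple i ^ absLength (tZero cs i) w * w : W)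

theorem altCoset_eq_ite (w : W) :
    cs.altCoset i w = if Even (absLength (tZero cs i) w)
      then (w : W ⧸ Subgroup.zpowers (cs.simple i))
      else ((cs.simple i * w * cs.simple i : W) : W ⧸ Subgroup.zpowers (cs.simple i)) := by
  unfold altCoset
  split_ifs with h
  · rw [cs.simple_pow_of_even i h, one_mul]
  · rw [cs.simple_pow_of_odd i (Nat.not_even_iff_odd.mp h),
      QuotientGroup.mk_mul_of_mem _ (Subgroup.mem_zpowers _)]

theorem cosetLength_altCoset {w : W} (hw : w ∈ alternating cs) :
    cosetLength (reflSet cs) (Subgroup.zpowers (cs.simple i)) (cs.altCoset i w) =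
      absLength (tZero cs i) w := by
  rw [altCoset, cosetLength_mk_simple_pow_mul, cs.absLength_tZero_eq_cosetLength i hw]

theorem injOn_altCoset : Set.InjOn (cs.altCoset i) {w | w ∈ alternating cs} := by
  intro u hu v hv h
  have hk := (cs.cosetLength_altCoset i hu).symm.trans (h ▸ cs.cosetLength_altCoset i hv)
  rw [altCoset, altCoset, hk] at h
  refine mul_left_cancel (cs.eq_of_mk_eq_of_lengthParity_eq i h ?_)
  rw [map_mul, map_mul, MonoidHom.mem_ker.mp hu, MonoidHom.mem_ker.mp hv]

theorem surjOn_altCoset : Set.SurjOn (cs.altCoset i) {w | w ∈ alternating cs} Set.univ := by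
  intro x _
  obtain ⟨g, rfl, hg⟩ := exists_absLength_eq_cosetLength (T := reflSet cs) x
  have hw := cs.simple_pow_absLength_mul_mem_alternating i g
  have hk : absLength (tZero cs i) (cs.simple i ^ absLength (reflSet cs) g * g) =
      absLength (reflSet cs) g := by
    rw [cs.absLength_tZero_eq_cosetLength i hw, cosetLength_mk_simple_pow_mul, hg]
  refine ⟨_, hw, ?_⟩
  rw [altCoset, hk, ← mul_assoc, simple_pow_mul_self, one_mul]

theorem bijOn_altCoset : Set.BijOn (cs.altCoset i) {w | w ∈ alternating cs} Set.univ :=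
  ⟨fun _ _ => Set.mem_univ _, cs.injOn_altCoset i, cs.surjOn_altCoset i⟩

theorem altCoset_simple_mul_mul {t u : W}
    (hlen : absLength (tZero cs i) (cs.simple i * t * u) = absLength (tZero cs i) u + 1) :
    cs.altCoset i (cs.simple i * t * u) =
      (cs.simple i ^ absLength (tZero cs i) u * t * (cs.simple i ^ absLength (tZero cs i) u)⁻¹) •
        cs.altCoset i u := by
  rw [altCoset, altCoset, hlen, MulAction.Quotient.smul_coe, smul_eq_mul,
    mul_assoc (cs.simple i), simple_pow_succ_mul_simple_mul]
  congr 1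
  group

theorem eq_simple_mul_conj_mul_of_altCoset_eq_smul {t u v : W} (ht : cs.IsReflection t)
    (hu : u ∈ alternating cs) (hv : v ∈ alternating cs)
    (hlen : absLength (tZero cs i) v = absLength (tZero cs i) u + 1)
    (h : cs.altCoset i v = t • cs.altCoset i u) :
    v = cs.simple i *
      (cs.simple i ^ absLength (tZero cs i) u * t * (cs.simple i ^ absLength (tZero cs i) u)⁻¹) *
        u := by
  rw [altCoset, altCoset, hlen, MulAction.Quotient.smul_coe, smul_eq_mul] at h
  have h := cs.eq_of_mk_eq_of_lengthParity_eq i h (by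
    rw [map_mul, map_mul, map_mul, lengthParity_simple_pow, lengthParity_simple_pow,
      MonoidHom.mem_ker.mp hu, MonoidHom.mem_ker.mp hv, cs.lengthParity_of_isReflection ht,
      mul_one, mul_one, ← ofAdd_add, Nat.cast_succ, add_comm])
  refine mul_left_cancel (a := cs.simple i ^ (absLength (tZero cs i) u + 1)) ?_
  rw [h, mul_assoc (cs.simple i), simple_pow_succ_mul_simple_mul, inv_simple_pow]
  simp only [← mul_assoc, simple_pow_mul_self, one_mul]

theorem cosetStep_altCoset_iff {u v : W} (hu : u ∈ alternating cs) (hv : v ∈ alternating cs) :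
    cosetStep (reflSet cs) (Subgroup.zpowers (cs.simple i)) (cs.altCoset i u)
        (cs.altCoset i v) ↔
      ∃ τ ∈ tZero cs i, v = τ * u ∧ absLength (tZero cs i) u < absLength (tZero cs i) v := by
  rw [cosetStep, cs.cosetLength_altCoset i hu, cs.cosetLength_altCoset i hv]
  constructor
  · rintro ⟨t, ht, h, hlen⟩
    exact ⟨_, ⟨_, ht.conj _, rfl⟩,
      cs.eq_simple_mul_conj_mul_of_altCoset_eq_smul i ht hu hv hlen.symm h, by omega⟩
  · rintro ⟨_, ⟨t, ht, rfl⟩, rfl, hlt⟩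
    have hτ : cs.simple i * t ∈ tZero cs i := ⟨t, ht, rfl⟩
    have hle := absLength_mul_le (Submonoid.subset_closure hτ) (cs.mem_closure_tZero i hu)
    have hlen : absLength (tZero cs i) (cs.simple i * t * u) = absLength (tZero cs i) u + 1 := by
      have := absLength_le_one hτ
      omega
    exact ⟨_, ht.conj _, cs.altCoset_simple_mul_mul i hlen, hlen.symm⟩

end CoxeterSystem

theorem alt_abs_iso_coset_abs {B W : Type*} [Group W] {M : CoxeterMatrix B}
    (cs : CoxeterSystem M W) (i₀ : B)
    (φ : W → W ⧸ Subgroup.zpowers (cs.simple i₀))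
    (hφ : ∀ w : W, φ w =
      if Even (absLength (tZero cs i₀) w)
      then (w : W ⧸ Subgroup.zpowers (cs.simple i₀))
      else ((cs.simple i₀ * w * cs.simple i₀ : W) : W ⧸ Subgroup.zpowers (cs.simple i₀))) :
    -- φ restricts to a bijection from W⁺ onto W/⟨s₀⟩,
    Set.BijOn φ {w : W | w ∈ alternating cs} Set.univ ∧
    -- which is an isomorphism of the absolute orders:
    ∀ u ∈ alternating cs, ∀ v ∈ alternating cs,
      (altLe cs i₀ u v ↔
        cosetLe (reflSet cs) (Subgroup.zpowers (cs.simple i₀)) (φ u) (φ v)) := by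
  obtain rfl : φ = cs.altCoset i₀ :=
    funext fun w => (hφ w).trans (cs.altCoset_eq_ite i₀ w).symm
  refine ⟨cs.bijOn_altCoset i₀, fun u hu v hv => ?_⟩
  rw [cosetLe_iff_reflTransGen_cosetStep cs.closure_reflSet]
  exact Relation.reflTransGen_iff_of_bijOn (cs.bijOn_altCoset i₀)
    (fun a b => and_congr_right fun ha => and_congr_right fun hb =>
      (cs.cosetStep_altCoset_iff i₀ ha hb).symm) hu hv
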